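/- arXiv:1407.2907 — 4 statements merged into one kernel-verified Lean document; each statement's English description precedes it below -/
import Mathlib

section
/- Let U, n, L be natural numbers with n ≥ 1, L ≥ 1 and 4nL ≤ U. Then the number of L-well-separated sets of n points in {0,…,U−1} is at least ((U − 4nL)/n)^n (as real numbers). -/
private def wsF (c : ℕ) (T : Finset ℕ) (t : ℕ) : ℕ :=
  c + c * (T.filter (· < t)).card + t

private lemma wsF_strictMono (c : ℕ) (T : Finset ℕ) : StrictMono (wsF c T) := by
  intro s t hst
  have h : T.filter (· < s) ⊆ T.filter (· < t) :=
    Finset.monotone_filter_right T (fun x _ hx => lt_trans hx hst)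
  have h2 : c * (T.filter (· < s)).card ≤ c * (T.filter (· < t)).card :=
    Nat.mul_le_mul_left c (Finset.card_le_card h)
  unfold wsF
  omega

private lemma wsF_gap (c : ℕ) {T : Finset ℕ} {s t : ℕ} (hs : s ∈ T) (hst : s < t) :
    wsF c T s + c + 1 ≤ wsF c T t := by
  have h : insert s (T.filter (· < s)) ⊆ T.filter (· < t) := by
    intro x hx
    rcases Finset.mem_insert.mp hx with rfl | hx
    · exact Finset.mem_filter.mpr ⟨hs, hst⟩
    · obtain ⟨h1, h2⟩ := Finset.mem_filter.mp hx
      exact Finset.mem_filter.mpr ⟨h1, lt_trans h2 hst⟩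
  have hcard : (T.filter (· < s)).card + 1 ≤ (T.filter (· < t)).card := by
    have := Finset.card_le_card h
    rwa [Finset.card_insert_of_notMem (by simp)] at this
  have h2 : c * ((T.filter (· < s)).card + 1) ≤ c * (T.filter (· < t)).card :=
    Nat.mul_le_mul_left c hcard
  have h3 : c * ((T.filter (· < s)).card + 1) = c * (T.filter (· < s)).card + c := by ring
  unfold wsF
  omega

private def wsMap (c : ℕ) (T : Finset ℕ) : Finset ℕ := T.image (wsF c T)

private lemma wsMap_card (c : ℕ) (T : Finset ℕ) : (wsMap c T).card = T.card :=
  Finset.card_image_of_injective _ (wsF_strictMono c T).injective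

private lemma wsMap_filter_card (c : ℕ) {T : Finset ℕ} {t : ℕ} :
    ((wsMap c T).filter (· < wsF c T t)).card = (T.filter (· < t)).card := by
  have : (wsMap c T).filter (· < wsF c T t) = (T.filter (· < t)).image (wsF c T) := by
    ext x
    simp only [wsMap, Finset.mem_filter, Finset.mem_image]
    constructor
    · rintro ⟨⟨a, ha, rfl⟩, hlt⟩
      exact ⟨a, ⟨ha, (wsF_strictMono c T).lt_iff_lt.mp hlt⟩, rfl⟩
    · rintro ⟨a, ⟨h1, h2⟩, rfl⟩
      exact ⟨⟨a, h1, rfl⟩, (wsF_strictMono c T) h2⟩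
  rw [this, Finset.card_image_of_injective _ (wsF_strictMono c T).injective]

private def wsInv (c : ℕ) (S : Finset ℕ) : Finset ℕ :=
  S.image (fun x => x - c - c * (S.filter (· < x)).card)

private lemma wsInv_wsMap (c : ℕ) (T : Finset ℕ) : wsInv c (wsMap c T) = T := by
  have hsub : T ⊆ wsInv c (wsMap c T) := by
    intro t ht
    apply Finset.mem_image.mpr
    refine ⟨wsF c T t, Finset.mem_image_of_mem _ ht, ?_⟩
    rw [wsMap_filter_card c]
    unfold wsF
    omega
  refine (Finset.eq_of_subset_of_card_le hsub ?_).symm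
  calc (wsInv c (wsMap c T)).card ≤ (wsMap c T).card := Finset.card_image_le
    _ = T.card := wsMap_card c T


/-- **Counting `L`-well-separated point sets.**
For `n ≥ 1`, `L ≥ 1` and `4nL ≤ U`, the number of `n`-element subsets `S` of `{0,…,U-1}`
that are `L`-well-separated (i.e. `|x - y| ≥ 2L` for all distinct `x, y ∈ S`, and every
`x ∈ S` satisfies `x ≥ 2L - 1` and `x ≤ U - 2L`) is at least `((U - 4nL)/n)^n`. -/
theorem count_well_separated_sets (U n L : ℕ) (hn : 1 ≤ n) (hL : 1 ≤ L)
    (hU : 4 * n * L ≤ U) :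
    (((U : ℝ) - 4 * n * L) / n) ^ n ≤
      ((((Finset.range U).powersetCard n).filter (fun S : Finset ℕ =>
        (∀ x ∈ S, ∀ y ∈ S, x ≠ y → (2 * L : ℤ) ≤ |(x : ℤ) - (y : ℤ)|) ∧
        (∀ x ∈ S, 2 * L - 1 ≤ x ∧ x + 2 * L ≤ U))).card : ℝ) := by
  set c : ℕ := 2 * L - 1 with hc
  have hc1 : c + 1 = 2 * L := by omega
  have hLn : 2 * L * 1 ≤ 2 * L * n := Nat.mul_le_mul_left _ hn
  have hU2 : 2 * L * (n + 1) ≤ U := by nlinarith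
  set m : ℕ := U + 2 - 2 * L * (n + 1) with hm
  have hmU : m + 2 * L * (n + 1) = U + 2 := Nat.sub_add_cancel (by omega)
  have hq : 2 * L * n + 2 * L = 2 * L * (n + 1) := by ring
  have hcn : c * n + n = 2 * L * n := by
    calc c * n + n = (c + 1) * n := by ring
      _ = 2 * L * n := by rw [hc1]
  -- the injection
  set A : Finset (Finset ℕ) := (Finset.range (m + n - 1)).powersetCard n with hA
  set Tgt := (((Finset.range U).powersetCard n).filter (fun S : Finset ℕ =>
        (∀ x ∈ S, ∀ y ∈ S, x ≠ y → (2 * L : ℤ) ≤ |(x : ℤ) - (y : ℤ)|) ∧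
        (∀ x ∈ S, 2 * L - 1 ≤ x ∧ x + 2 * L ≤ U))) with hTgt
  have hmaps : ∀ T ∈ A, wsMap c T ∈ Tgt := by
    intro T hT
    obtain ⟨hTsub, hTcard⟩ := Finset.mem_powersetCard.mp hT
    have hbound : ∀ t ∈ T, wsF c T t + 2 * L ≤ U := by
      intro t ht
      have hr : (T.filter (· < t)).card + 1 ≤ n := by
        have h1 : T.filter (· < t) ⊆ T.erase t := by
          intro x hx
          obtain ⟨hx1, hx2⟩ := Finset.mem_filter.mp hx
          exact Finset.mem_erase.mpr ⟨Nat.ne_of_lt hx2, hx1⟩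
        have h2 := Finset.card_le_card h1
        rw [Finset.card_erase_of_mem ht, hTcard] at h2
        omega
      have hmul : c * ((T.filter (· < t)).card + 1) ≤ c * n := Nat.mul_le_mul_left c hr
      have hmul' : c * ((T.filter (· < t)).card + 1)
          = c * (T.filter (· < t)).card + c := by ring
      have htlt : t < m + n - 1 := Finset.mem_range.mp (hTsub ht)
      unfold wsF
      omega
    have hlt : ∀ t ∈ T, wsF c T t < U := fun t ht => by
      have := hbound t ht; omega
    rw [hTgt, Finset.mem_filter]
    refine ⟨Finset.mem_powersetCard.mpr ⟨?_, ?_⟩, ?_, ?_⟩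
    · intro x hx
      obtain ⟨t, ht, rfl⟩ := Finset.mem_image.mp hx
      exact Finset.mem_range.mpr (hlt t ht)
    · rw [wsMap_card, hTcard]
    · intro x hx y hy hxy
      obtain ⟨s, hs, rfl⟩ := Finset.mem_image.mp hx
      obtain ⟨t, ht, rfl⟩ := Finset.mem_image.mp hy
      rcases lt_trichotomy s t with h | h | h
      · have := wsF_gap c hs h
        have hz : (wsF c T s : ℤ) + 2 * L ≤ wsF c T t := by exact_mod_cast by omega
        exact le_abs.mpr (Or.inr (by linarith))
      · exact absurd (by rw [h]) hxy
      · have := wsF_gap c ht h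
        have hz : (wsF c T t : ℤ) + 2 * L ≤ wsF c T s := by exact_mod_cast by omega
        exact le_abs.mpr (Or.inl (by linarith))
    · intro x hx
      obtain ⟨t, ht, rfl⟩ := Finset.mem_image.mp hx
      refine ⟨?_, hbound t ht⟩
      have : c ≤ wsF c T t := by
        simp only [wsF, Nat.add_assoc]
        exact Nat.le_add_right _ _
      omega
  have hinj : Set.InjOn (wsMap c) A := by
    intro T1 _ T2 _ h
    have := wsInv_wsMap c T1
    rw [h, wsInv_wsMap c T2] at this
    exact this.symm
  have hcard : (m + n - 1).choose n ≤ Tgt.card := by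
    have := Finset.card_le_card_of_injOn (wsMap c) hmaps hinj
    rwa [hA, Finset.card_powersetCard, Finset.card_range] at this
  -- numeric chain
  have hn0 : (0 : ℝ) < n := by exact_mod_cast hn
  have hkey : (m : ℕ) ^ n ≤ (m + n - 1).choose n * n ^ n := by
    calc m ^ n ≤ m.ascFactorial n := Nat.pow_succ_le_ascFactorial m n
      _ = Nat.factorial n * (m + n - 1).choose n := Nat.ascFactorial_eq_factorial_mul_choose' m n
      _ ≤ n ^ n * (m + n - 1).choose n :=
        Nat.mul_le_mul_right _ (Nat.factorial_le_pow n)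
      _ = (m + n - 1).choose n * n ^ n := Nat.mul_comm _ _
  have step1 : (((U : ℝ) - 4 * n * L) / n) ^ n ≤ ((m : ℝ) / n) ^ n := by
    have hU4 : (4 * n * L : ℝ) ≤ U := by exact_mod_cast hU
    have hmR : ((U : ℝ) - 4 * n * L) ≤ m := by
      have : (m : ℝ) + 2 * L * (n + 1) = U + 2 := by exact_mod_cast hmU
      have hLLn : (L : ℝ) * 1 ≤ L * n := by
        have h1 : (1 : ℝ) ≤ n := by exact_mod_cast hn
        have h2 : (0 : ℝ) ≤ L := by positivity
        exact mul_le_mul_of_nonneg_left h1 h2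
      nlinarith
    refine pow_le_pow_left₀ (div_nonneg (by linarith) hn0.le) ?_ n
    exact div_le_div_of_nonneg_right hmR hn0.le
  have step2 : ((m : ℝ) / n) ^ n ≤ ((m + n - 1).choose n : ℝ) := by
    rw [div_pow, div_le_iff₀ (by positivity)]
    exact_mod_cast hkey
  calc (((U : ℝ) - 4 * n * L) / n) ^ n ≤ ((m : ℝ) / n) ^ n := step1
    _ ≤ ((m + n - 1).choose n : ℝ) := step2
    _ ≤ (Tgt.card : ℝ) := by exact_mod_cast hcard
end

section
/- Let r ≥ 1 be a natural number, (Ω, μ) a probability space, and u : Ω → ℕ → ZMod r a random family such that (i) for every a ∈ ℕ, the random variable ω ↦ u(ω)(a) is uniformly distributed on ZMod r (its pushforward measure is the uniform measure), and (ii) for all distinct a, b ∈ ℕ the random variables ω ↦ u(ω)(a) and ω ↦ u(ω)(b) are independent. Define h(ω)(x) = u(ω)(⌊x/r⌋) + (x mod r) in ZMod r. Then for all distinct natural numbers x₁ ≠ x₂, μ{ω : h(ω)(x₁) = h(ω)(x₂)} ≤ 1/r. -/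
open MeasureTheory ProbabilityTheory
open scoped ENNReal

/-- **Collision probability of the locality-preserving hash.**
Let `u : Ω → ℕ → ZMod r` be a family of random variables such that each `ω ↦ u ω a` is
uniformly distributed on `ZMod r` (its pushforward is the uniform measure
`r⁻¹ • count`) and any two distinct members are independent. For
`h ω x = u ω ⌊x/r⌋ + (x mod r)`, any two distinct points `x₁ ≠ x₂` collide with
probability at most `1/r`. -/
theorem hash_collision_probability (r : ℕ) (hr : 1 ≤ r)
    {Ω : Type*} [MeasurableSpace Ω] (μ : Measure Ω) [IsProbabilityMeasure μ]
    (u : Ω → ℕ → ZMod r)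
    (hmeas : ∀ a : ℕ, Measurable fun ω => u ω a)
    (hunif : ∀ a : ℕ,
      Measure.map (fun ω => u ω a) μ = (r : ℝ≥0∞)⁻¹ • Measure.count)
    (hind : ∀ a b : ℕ, a ≠ b →
      IndepFun (fun ω => u ω a) (fun ω => u ω b) μ)
    (x₁ x₂ : ℕ) (hne : x₁ ≠ x₂) :
    μ {ω | u ω (x₁ / r) + (x₁ : ZMod r) = u ω (x₂ / r) + (x₂ : ZMod r)} ≤
      (r : ℝ≥0∞)⁻¹ := by
  haveI : NeZero r := ⟨by omega⟩
  by_cases hab : x₁ / r = x₂ / r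
  · -- same block: casts of x₁, x₂ differ, so the event is empty
    have hmod : (x₁ : ZMod r) ≠ (x₂ : ZMod r) := by
      intro h
      rw [ZMod.natCast_eq_natCast_iff] at h
      have h' : x₁ % r = x₂ % r := h
      have h1 := Nat.div_add_mod x₁ r
      have h2 := Nat.div_add_mod x₂ r
      rw [hab, h'] at h1
      omega
    have hempty : {ω | u ω (x₁ / r) + (x₁ : ZMod r) = u ω (x₂ / r) + (x₂ : ZMod r)} = ∅ := by
      ext ω
      simp only [Set.mem_setOf_eq, Set.mem_empty_iff_false, iff_false]
      intro h
      rw [hab] at h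
      exact hmod (add_left_cancel h)
    rw [hempty]
    simp
  · -- distinct blocks: use pairwise independence
    have hsingle : ∀ (n : ℕ) (k : ZMod r),
        μ ((fun ω => u ω n) ⁻¹' {k}) = (r : ℝ≥0∞)⁻¹ := by
      intro n k
      rw [← Measure.map_apply (hmeas n) (measurableSet_singleton k), hunif n]
      simp [Measure.count_singleton]
    set c := (x₂ : ZMod r) - (x₁ : ZMod r) with hc
    have hset : {ω | u ω (x₁ / r) + (x₁ : ZMod r) = u ω (x₂ / r) + (x₂ : ZMod r)}
        = ⋃ v : ZMod r,
            ((fun ω => u ω (x₁ / r)) ⁻¹' {v + c} ∩ (fun ω => u ω (x₂ / r)) ⁻¹' {v}) := by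
      ext ω
      simp only [Set.mem_setOf_eq, Set.mem_iUnion, Set.mem_inter_iff,
        Set.mem_preimage, Set.mem_singleton_iff]
      constructor
      · intro h
        exact ⟨u ω (x₂ / r), by rw [hc]; linear_combination h, rfl⟩
      · rintro ⟨v, h1, h2⟩
        rw [h1, h2, hc]; ring
    rw [hset, measure_iUnion]
    · have hval : ∀ v : ZMod r,
          μ ((fun ω => u ω (x₁ / r)) ⁻¹' {v + c} ∩ (fun ω => u ω (x₂ / r)) ⁻¹' {v})
            = (r : ℝ≥0∞)⁻¹ * (r : ℝ≥0∞)⁻¹ := by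
        intro v
        rw [(hind _ _ hab).measure_inter_preimage_eq_mul _ _
          (measurableSet_singleton _) (measurableSet_singleton _),
          hsingle, hsingle]
      rw [tsum_congr hval, tsum_fintype]
      simp only [Finset.sum_const, Finset.card_univ, ZMod.card, nsmul_eq_mul]
      have hr0 : (r : ℝ≥0∞) ≠ 0 := by
        exact Nat.cast_ne_zero.mpr (by omega)
      rw [← mul_assoc, ENNReal.mul_inv_cancel hr0 (by simp), one_mul]
    · intro v w hvw
      refine Set.disjoint_left.mpr ?_
      rintro ω ⟨-, h2⟩ ⟨-, h4⟩
      exact hvw (h2.symm.trans h4)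
    · intro v
      exact ((hmeas _) (measurableSet_singleton _)).inter
        ((hmeas _) (measurableSet_singleton _))
end

section
/- Let n, L, r be naturals with r ≥ 1 and let ε > 0 be real with n·L/r ≤ ε. Let (Ω, μ) be a probability space and u : Ω → ℕ → ZMod r satisfy: for every a, ω ↦ u(ω)(a) is uniform on ZMod r, and for all distinct a, b, the variables ω ↦ u(ω)(a) and ω ↦ u(ω)(b) are independent. Define h(ω)(x) = u(ω)(⌊x/r⌋) + (x mod r) in ZMod r. Then for every finite set S of natural numbers with |S| ≤ n and every interval I = {a, a+1, …, a+ℓ−1} of ℓ ≤ L consecutive naturals with I ∩ S = ∅, the probability that some point of S collides with some point of I satisfies μ{ω : ∃ x ∈ S, ∃ y ∈ I, h(ω)(x) = h(ω)(y)} ≤ n·L/r ≤ ε. -/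
open MeasureTheory ProbabilityTheory
open scoped ENNReal

lemma collide_prob {r : ℕ} [NeZero r] {Ω : Type*} [MeasurableSpace Ω]
    (μ : Measure Ω) [IsProbabilityMeasure μ]
    (X Y : Ω → ZMod r) (hX : Measurable X) (hY : Measurable Y)
    (hXu : Measure.map X μ = (r : ℝ≥0∞)⁻¹ • Measure.count)
    (hind : IndepFun X Y μ) (c : ZMod r) :
    μ {ω | X ω = Y ω + c} = (r : ℝ≥0∞)⁻¹ := by
  have hXsing : ∀ v : ZMod r, μ (X ⁻¹' {v}) = (r : ℝ≥0∞)⁻¹ := by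
    intro v
    have := Measure.map_apply (μ := μ) hX (measurableSet_singleton v)
    rw [hXu] at this
    simp [Measure.count_singleton] at this
    simpa using this.symm
  have hset : {ω | X ω = Y ω + c} = ⋃ v : ZMod r, (X ⁻¹' {v + c} ∩ Y ⁻¹' {v}) := by
    ext ω
    simp only [Set.mem_setOf_eq, Set.mem_iUnion, Set.mem_inter_iff, Set.mem_preimage,
      Set.mem_singleton_iff]
    constructor
    · intro h; exact ⟨Y ω, h, rfl⟩
    · rintro ⟨v, h1, h2⟩; rw [h1, h2]
  rw [hset, measure_iUnion]
  · have hterm : ∀ v : ZMod r, μ (X ⁻¹' {v + c} ∩ Y ⁻¹' {v}) =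
        (r : ℝ≥0∞)⁻¹ * μ (Y ⁻¹' {v}) := by
      intro v
      rw [hind.measure_inter_preimage_eq_mul _ _ (measurableSet_singleton _)
        (measurableSet_singleton _), hXsing]
    simp_rw [hterm]
    rw [ENNReal.tsum_mul_left, tsum_fintype]
    have huniv : (⋃ v : ZMod r, Y ⁻¹' {v}) = Set.univ := by ext ω; simp
    have : ∑ v : ZMod r, μ (Y ⁻¹' {v}) = 1 := by
      calc ∑ v : ZMod r, μ (Y ⁻¹' {v}) = ∑' v : ZMod r, μ (Y ⁻¹' {v}) :=
            (tsum_fintype _).symm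
        _ = μ (⋃ v : ZMod r, Y ⁻¹' {v}) := by
            rw [measure_iUnion]
            · intro v w hvw
              simp only [Function.onFun, Set.disjoint_left, Set.mem_preimage,
                Set.mem_singleton_iff]
              rintro ω rfl h; exact hvw h
            · exact fun v => hY (measurableSet_singleton v)
        _ = 1 := by rw [huniv]; exact measure_univ
    rw [this, mul_one]
  · intro v w hvw
    simp only [Function.onFun, Set.disjoint_left, Set.mem_inter_iff, Set.mem_preimage,
      Set.mem_singleton_iff]
    rintro ω ⟨_, rfl⟩ ⟨_, h⟩; exact hvw h
  · exact fun v => ((hX (measurableSet_singleton _)).inter (hY (measurableSet_singleton _)))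

/-- **False positive rate of the hash-based approximate range emptiness structure.**
Let `u : Ω → ℕ → ZMod r` be a pairwise independent family with each `ω ↦ u ω a`
uniform on `ZMod r`, and set `h ω x = u ω ⌊x/r⌋ + (x mod r)`. For any finite `S ⊆ ℕ`
with `|S| ≤ n` and any interval `I = [a, a+ℓ-1]` of `ℓ ≤ L` consecutive naturals
disjoint from `S`, the probability that some point of `S` collides with some point of
`I` under `h` is at most `n·L/r ≤ ε`. -/
theorem hash_false_positive_rate (n L r : ℕ) (hr : 1 ≤ r) (ε : ℝ)
    (hε : (n : ℝ) * L / r ≤ ε)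
    {Ω : Type*} [MeasurableSpace Ω] (μ : Measure Ω) [IsProbabilityMeasure μ]
    (u : Ω → ℕ → ZMod r)
    (hmeas : ∀ a : ℕ, Measurable fun ω => u ω a)
    (hunif : ∀ a : ℕ,
      Measure.map (fun ω => u ω a) μ = (r : ℝ≥0∞)⁻¹ • Measure.count)
    (hind : ∀ a b : ℕ, a ≠ b →
      IndepFun (fun ω => u ω a) (fun ω => u ω b) μ)
    (S : Finset ℕ) (hS : S.card ≤ n)
    (a ℓ : ℕ) (hℓ : ℓ ≤ L)
    (hdisj : ∀ y : ℕ, a ≤ y → y < a + ℓ → y ∉ S) :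
    μ {ω | ∃ x ∈ S, ∃ y : ℕ, a ≤ y ∧ y < a + ℓ ∧
        u ω (x / r) + (x : ZMod r) = u ω (y / r) + (y : ZMod r)} ≤
      (n : ℝ≥0∞) * L / r ∧
    (n : ℝ≥0∞) * L / r ≤ ENNReal.ofReal ε := by
  haveI : NeZero r := ⟨by omega⟩
  set I : Finset ℕ := Finset.Ico a (a + ℓ) with hI
  -- per-pair bound
  have hpair : ∀ x ∈ S, ∀ y ∈ I,
      μ {ω | u ω (x / r) + (x : ZMod r) = u ω (y / r) + (y : ZMod r)} ≤ (r : ℝ≥0∞)⁻¹ := by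
    intro x hx y hy
    simp only [hI, Finset.mem_Ico] at hy
    have hxy : x ≠ y := by rintro rfl; exact hdisj x hy.1 hy.2 hx
    by_cases hq : x / r = y / r
    · have hempty : {ω | u ω (x / r) + (x : ZMod r) = u ω (y / r) + (y : ZMod r)} = ∅ := by
        ext ω
        simp only [Set.mem_setOf_eq, Set.mem_empty_iff_false, iff_false]
        rw [hq, add_right_inj]
        intro hcast
        apply hxy
        have hmod : x % r = y % r := by
          have := (ZMod.natCast_eq_natCast_iff x y r).mp hcast
          simpa [Nat.ModEq] using this
        calc x = r * (x / r) + x % r := (Nat.div_add_mod x r).symm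
          _ = r * (y / r) + y % r := by rw [hq, hmod]
          _ = y := Nat.div_add_mod y r
      rw [hempty]; simp
    · have heq : {ω | u ω (x / r) + (x : ZMod r) = u ω (y / r) + (y : ZMod r)} =
          {ω | u ω (x / r) = u ω (y / r) + ((y : ZMod r) - (x : ZMod r))} := by
        ext ω
        simp only [Set.mem_setOf_eq]
        constructor <;> intro h <;> linear_combination h
      rw [heq,
        collide_prob μ _ _ (hmeas _) (hmeas _) (hunif _) (hind _ _ hq) _]
  -- union bound
  constructor
  · have hsub : {ω | ∃ x ∈ S, ∃ y : ℕ, a ≤ y ∧ y < a + ℓ ∧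
        u ω (x / r) + (x : ZMod r) = u ω (y / r) + (y : ZMod r)} ⊆
        ⋃ x ∈ S, ⋃ y ∈ I, {ω | u ω (x / r) + (x : ZMod r) = u ω (y / r) + (y : ZMod r)} := by
      rintro ω ⟨x, hx, y, h1, h2, h3⟩
      simp only [Set.mem_iUnion]
      exact ⟨x, hx, y, by simp [hI, Finset.mem_Ico]; omega, h3⟩
    calc μ _ ≤ μ (⋃ x ∈ S, ⋃ y ∈ I,
          {ω | u ω (x / r) + (x : ZMod r) = u ω (y / r) + (y : ZMod r)}) :=
          measure_mono hsub
      _ ≤ ∑ x ∈ S, μ (⋃ y ∈ I,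
          {ω | u ω (x / r) + (x : ZMod r) = u ω (y / r) + (y : ZMod r)}) :=
          measure_biUnion_finset_le _ _
      _ ≤ ∑ x ∈ S, ∑ y ∈ I,
          μ {ω | u ω (x / r) + (x : ZMod r) = u ω (y / r) + (y : ZMod r)} :=
          Finset.sum_le_sum fun x _ => measure_biUnion_finset_le _ _
      _ ≤ ∑ x ∈ S, ∑ y ∈ I, (r : ℝ≥0∞)⁻¹ :=
          Finset.sum_le_sum fun x hx => Finset.sum_le_sum fun y hy => hpair x hx y hy
      _ = (S.card : ℝ≥0∞) * I.card * (r : ℝ≥0∞)⁻¹ := by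
          simp [Finset.sum_const, mul_assoc]
      _ ≤ (n : ℝ≥0∞) * L * (r : ℝ≥0∞)⁻¹ := by
          have h1 : (S.card : ℝ≥0∞) ≤ n := by exact_mod_cast hS
          have h2 : (I.card : ℝ≥0∞) ≤ L := by
            simp only [hI, Nat.card_Ico]
            exact_mod_cast (show a + ℓ - a ≤ L by omega)
          gcongr
      _ = (n : ℝ≥0∞) * L / r := by rw [div_eq_mul_inv]
  · have hr' : (0:ℝ) < r := by exact_mod_cast hr
    calc (n : ℝ≥0∞) * L / r = ENNReal.ofReal ((n : ℝ) * L / r) := by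
          rw [ENNReal.ofReal_div_of_pos hr', ENNReal.ofReal_mul (by positivity)]
          simp
      _ ≤ ENNReal.ofReal ε := ENNReal.ofReal_le_ofReal hε
end

section
/- Let w ≥ 1 and let a, b be natural numbers with a < b < 2^w. Let i be the largest index such that the i-th bits of a and b differ (i.e., the largest i with Nat.testBit a i ≠ Nat.testBit b i; necessarily Nat.testBit a i = false and Nat.testBit b i = true). Then for every natural number x < 2^w: a ≤ x ≤ b if and only if (⌊x/2^i⌋ = ⌊a/2^i⌋ and x ≥ a) or (⌊x/2^i⌋ = ⌊b/2^i⌋ and x ≤ b). -/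
/-- **Range membership via the longest common prefix.**
Let `a < b < 2^w` be `w`-bit numbers and let `i` be the largest index at which the
binary representations of `a` and `b` differ. Then for every `x < 2^w`, we have
`a ≤ x ≤ b` iff `x` shares the prefix of `a` down to bit `i` (i.e. `⌊x/2^i⌋ = ⌊a/2^i⌋`)
and `x ≥ a`, or `x` shares the prefix of `b` down to bit `i` (i.e. `⌊x/2^i⌋ = ⌊b/2^i⌋`)
and `x ≤ b`. -/
theorem range_membership_common_prefix (w a b i : ℕ) (hw : 1 ≤ w)
    (hab : a < b) (hb : b < 2 ^ w)
    (hi : Nat.testBit a i ≠ Nat.testBit b i)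
    (hi_max : ∀ j : ℕ, i < j → Nat.testBit a j = Nat.testBit b j) :
    ∀ x : ℕ, x < 2 ^ w →
      ((a ≤ x ∧ x ≤ b) ↔
        ((x / 2 ^ i = a / 2 ^ i ∧ a ≤ x) ∨ (x / 2 ^ i = b / 2 ^ i ∧ x ≤ b))) := by
  -- first, determine the bits at position i
  have hbits : Nat.testBit a i = false ∧ Nat.testBit b i = true := by
    cases hai : Nat.testBit a i <;> cases hbi : Nat.testBit b i
    · exact absurd (hai.trans hbi.symm) hi
    · exact ⟨rfl, rfl⟩
    · have : b < a := Nat.lt_of_testBit i hbi hai fun j hj => (hi_max j hj).symm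
      omega
    · exact absurd (hai.trans hbi.symm) hi
  -- high parts agree
  have hhigh : a / 2 ^ (i + 1) = b / 2 ^ (i + 1) := by
    apply Nat.eq_of_testBit_eq
    intro j
    have ha : a / 2 ^ (i + 1) = a >>> (i + 1) := (Nat.shiftRight_eq_div_pow a (i + 1)).symm
    have hbb : b / 2 ^ (i + 1) = b >>> (i + 1) := (Nat.shiftRight_eq_div_pow b (i + 1)).symm
    rw [ha, hbb, Nat.testBit_shiftRight, Nat.testBit_shiftRight]
    exact hi_max (i + 1 + j) (by omega)
  -- key fact: b / 2^i = a / 2^i + 1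
  have hmod : ∀ n : ℕ, n / 2 ^ i = 2 * (n / 2 ^ (i + 1)) + (Nat.testBit n i).toNat := by
    intro n
    have h1 : n / 2 ^ (i + 1) = (n / 2 ^ i) / 2 := by
      rw [Nat.div_div_eq_div_mul, pow_succ]
    have h2 : (n / 2 ^ i) % 2 = (Nat.testBit n i).toNat := by
      rw [Nat.testBit_eq_decide_div_mod_eq]
      rcases Nat.mod_two_eq_zero_or_one (n / 2 ^ i) with h | h <;> simp [h]
    omega
  have hkey : b / 2 ^ i = a / 2 ^ i + 1 := by
    have ha' := hmod a
    have hb' := hmod b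
    rw [hbits.1] at ha'
    rw [hbits.2] at hb'
    simp at ha' hb'
    omega
  have hpow : 0 < 2 ^ i := Nat.pow_pos (n := i) (by norm_num)
  intro x hx
  constructor
  · rintro ⟨h1, h2⟩
    have d1 : a / 2 ^ i ≤ x / 2 ^ i := Nat.div_le_div_right h1
    have d2 : x / 2 ^ i ≤ b / 2 ^ i := Nat.div_le_div_right h2
    rcases Nat.lt_or_ge (x / 2 ^ i) (b / 2 ^ i) with h | h
    · exact Or.inl ⟨by omega, h1⟩
    · exact Or.inr ⟨by omega, h2⟩
  · rintro (⟨heq, hax⟩ | ⟨heq, hxb⟩)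
    · refine ⟨hax, ?_⟩
      have h1 : x < (x / 2 ^ i + 1) * 2 ^ i := (Nat.div_lt_iff_lt_mul hpow).mp (Nat.lt_succ_self _)
      have h2 : b / 2 ^ i * 2 ^ i ≤ b := Nat.div_mul_le_self b (2 ^ i)
      have : x < b / 2 ^ i * 2 ^ i := by
        calc x < (x / 2 ^ i + 1) * 2 ^ i := h1
        _ = b / 2 ^ i * 2 ^ i := by rw [heq, ← hkey]
      omega
    · refine ⟨?_, hxb⟩
      have h1 : a < (a / 2 ^ i + 1) * 2 ^ i := (Nat.div_lt_iff_lt_mul hpow).mp (Nat.lt_succ_self _)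
      have h2 : x / 2 ^ i * 2 ^ i ≤ x := Nat.div_mul_le_self x (2 ^ i)
      have : a < x / 2 ^ i * 2 ^ i := by
        calc a < (a / 2 ^ i + 1) * 2 ^ i := h1
        _ = x / 2 ^ i * 2 ^ i := by rw [heq, hkey]
      omega
end
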